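/- arXiv:1304.1944 — 2 statements merged into one kernel-verified Lean document; each statement's English description precedes it below -/
import Mathlib

section
/- Vanishing of the low-order bits in lopsided division: let a b : ℤ with b odd, and let c, r : ℕ → ℤ be the lopsided-division sequences for a and b. Then for every i : ℕ, the integer 2^i divides both c i and r i; consequently the sequences ((c i : ℤ_[2]))_i and ((r i : ℤ_[2]))_i (images under the coercion ℤ → ℤ_[2]) both tend to 0 in ℤ_[2] as i → ∞ (in particular the borrow sequence converges to 0, as asserted in the lopsided division theorem). -/
/-!
By induction on `i`, the bits of `c i` below position `i` and the bits of `r i` up to position `i`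
vanish. In those positions the correction term `t i` agrees with `c i` (at position `i` because `b`
is odd), so both the difference bit `c ^^^ r ^^^ t` and the borrow bit vanish there, and the borrow
is then shifted up one place. Hence `2 ^ i` divides `c i` and `r i`, so both have 2-adic norm at
most `2 ^ (-i)`.
-/

instance : XorOp ℤ := ⟨Int.xor⟩
instance : AndOp ℤ := ⟨Int.land⟩

namespace Int

@[simp] lemma testBit_xor (x y : ℤ) (j : ℕ) :
    (x ^^^ y).testBit j = (x.testBit j ^^ y.testBit j) :=
  testBit_lxor x y j

@[simp] lemma testBit_and (x y : ℤ) (j : ℕ) :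
    (x &&& y).testBit j = (x.testBit j && y.testBit j) :=
  testBit_land x y j

@[simp] lemma testBit_not (x : ℤ) (j : ℕ) : (~~~x).testBit j = !x.testBit j := by
  cases x <;> simp [Complement.complement, Int.not, testBit]

@[simp] lemma testBit_zero_left (j : ℕ) : (0 : ℤ).testBit j = false := by
  simp [testBit]

lemma testBit_zero_of_odd {n : ℤ} (hn : Odd n) : n.testBit 0 = true := by
  obtain ⟨k, rfl⟩ := hn
  simpa [bit_val] using testBit_bit_zero true k

lemma testBit_two_mul_zero (m : ℤ) : (2 * m).testBit 0 = false := by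
  simpa [bit_val] using testBit_bit_zero false m

lemma testBit_two_mul_succ (m : ℤ) (j : ℕ) : (2 * m).testBit (j + 1) = m.testBit j := by
  simpa [bit_val] using testBit_bit_succ j false m

lemma testBit_two_pow_mul_add (m : ℤ) (i j : ℕ) :
    (2 ^ i * m).testBit (i + j) = m.testBit j := by
  induction i with
  | zero => simp
  | succ i ih => rw [pow_succ', mul_assoc, Nat.succ_add, testBit_two_mul_succ, ih]

lemma two_pow_dvd_iff_testBit_eq_false (n : ℕ) (x : ℤ) :
    2 ^ n ∣ x ↔ ∀ j < n, x.testBit j = false := by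
  induction n generalizing x with
  | zero => simp
  | succ n ih =>
    obtain ⟨m, rfl | rfl⟩ := x.even_or_odd'
    · rw [pow_succ', mul_dvd_mul_iff_left two_ne_zero, ih, Nat.forall_lt_succ_left]
      simp [testBit_two_mul_zero, testBit_two_mul_succ]
    · have hodd : Odd (2 * m + 1) := odd_two_mul_add_one m
      refine iff_of_false (fun h => ?_) fun h => ?_
      · exact Int.not_even_iff_odd.mpr hodd <|
          even_iff_two_dvd.mpr ((dvd_pow_self 2 n.succ_ne_zero).trans h)
      · simpa [testBit_zero_of_odd hodd] using h 0 n.succ_pos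

end Int

open Filter Topology

lemma PadicInt.tendsto_intCast_zero_of_pow_dvd {p : ℕ} [Fact p.Prime] {x : ℕ → ℤ}
    (hx : ∀ i, (p : ℤ) ^ i ∣ x i) : Tendsto (fun i => (x i : ℤ_[p])) atTop (𝓝 0) := by
  have hp : (1 : ℝ) < p := mod_cast (Fact.out : p.Prime).one_lt
  have hbound : Tendsto (fun i : ℕ => (p : ℝ) ^ (-(i : ℤ))) atTop (𝓝 0) := by
    simp_rw [zpow_neg, zpow_natCast, ← inv_pow]
    exact tendsto_pow_atTop_nhds_zero_of_lt_one (by positivity) (inv_lt_one_of_one_lt₀ hp)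
  exact squeeze_zero_norm (fun i => PadicInt.norm_int_le_pow_iff_dvd.mpr (hx i)) hbound

/-- The correction term `t i` of the `i`-th step. -/
def lopsidedTerm (b c : ℤ) (i : ℕ) : ℤ := if c.testBit i then 2 ^ i * b else 0

/-- One full-subtractor step: `c - r - t = (c ^^^ r ^^^ t) - lopsidedBorrow c r t`. -/
def lopsidedBorrow (c r t : ℤ) : ℤ := 2 * ((~~~c &&& r) ^^^ (r &&& t) ^^^ (t &&& ~~~c))

section

variable {b c r t : ℤ} {i : ℕ}

lemma testBit_lopsidedTerm (hb : Odd b) (hc : ∀ j < i, c.testBit j = false) :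
    ∀ j ≤ i, (lopsidedTerm b c i).testBit j = c.testBit j := by
  intro j hj
  obtain hj | rfl := hj.lt_or_eq
  · rw [hc j hj, ← (Int.two_pow_dvd_iff_testBit_eq_false i _).mp ?_ j hj]
    unfold lopsidedTerm
    split_ifs
    exacts [dvd_mul_right _ _, dvd_zero _]
  · unfold lopsidedTerm
    split_ifs with h
    · simpa [h] using (Int.testBit_two_pow_mul_add b j 0).trans (Int.testBit_zero_of_odd hb)
    · simpa using h

lemma testBit_xor_xor_eq_false {j : ℕ} (hr : r.testBit j = false)
    (ht : t.testBit j = c.testBit j) : (c ^^^ r ^^^ t).testBit j = false := by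
  simp [hr, ht]

lemma testBit_lopsidedBorrow_succ_eq_false {j : ℕ} (hr : r.testBit j = false)
    (ht : t.testBit j = c.testBit j) : (lopsidedBorrow c r t).testBit (j + 1) = false := by
  simp [lopsidedBorrow, Int.testBit_two_mul_succ, hr, ht]

end

lemma lopsided_testBit_eq_false {b : ℤ} (hb : Odd b) {c r : ℕ → ℤ} (hr0 : r 0 = 0)
    (hc : ∀ i, c (i + 1) = c i ^^^ r i ^^^ lopsidedTerm b (c i) i)
    (hr : ∀ i, r (i + 1) = lopsidedBorrow (c i) (r i) (lopsidedTerm b (c i) i)) (i : ℕ) :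
    (∀ j < i, (c i).testBit j = false) ∧ ∀ j ≤ i, (r i).testBit j = false := by
  induction i with
  | zero => simp [hr0]
  | succ i ih =>
    obtain ⟨hci, hri⟩ := ih
    have ht := testBit_lopsidedTerm hb hci
    refine ⟨fun j hj => ?_, fun j hj => ?_⟩
    · rw [hc]
      exact testBit_xor_xor_eq_false (hri j (by omega)) (ht j (by omega))
    · rw [hr]
      cases j with
      | zero => exact Int.testBit_two_mul_zero _
      | succ j => exact testBit_lopsidedBorrow_succ_eq_false (hri j (by omega)) (ht j (by omega))

theorem lopsided_division_tendsto_zero_general (b : ℤ) (hb : Odd b) (c r : ℕ → ℤ)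
    (hr0 : r 0 = 0)
    (hc : ∀ i, c (i + 1) =
      c i ^^^ r i ^^^ (if (c i).testBit i then 2 ^ i * b else 0))
    (hr : ∀ i, r (i + 1) =
      2 * (((~~~(c i)) &&& r i)
        ^^^ ((r i) &&& (if (c i).testBit i then 2 ^ i * b else 0))
        ^^^ ((if (c i).testBit i then 2 ^ i * b else 0) &&& (~~~(c i))))) :
    (∀ i : ℕ, (2 ^ i : ℤ) ∣ c i ∧ (2 ^ i : ℤ) ∣ r i) ∧
    Filter.Tendsto (fun i => ((c i : ℤ_[2]))) Filter.atTop (nhds 0) ∧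
    Filter.Tendsto (fun i => ((r i : ℤ_[2]))) Filter.atTop (nhds 0) := by
  have hdvd (i : ℕ) : (2 ^ i : ℤ) ∣ c i ∧ (2 ^ i : ℤ) ∣ r i := by
    obtain ⟨hci, hri⟩ := lopsided_testBit_eq_false hb hr0 hc hr i
    exact ⟨(Int.two_pow_dvd_iff_testBit_eq_false i _).mpr hci,
      (Int.two_pow_dvd_iff_testBit_eq_false i _).mpr fun j hj => hri j hj.le⟩
  exact ⟨hdvd, PadicInt.tendsto_intCast_zero_of_pow_dvd fun i => (hdvd i).1,
    PadicInt.tendsto_intCast_zero_of_pow_dvd fun i => (hdvd i).2⟩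

/-- Vanishing of the low-order bits in lopsided division: `2^i` divides both `c i`
and `r i`, and consequently both sequences tend to `0` in `ℤ_[2]`; in particular the
borrow sequence converges to `0`. -/
theorem lopsided_division_tendsto_zero (a b : ℤ) (hb : Odd b) (c r : ℕ → ℤ)
    (hc0 : c 0 = a) (hr0 : r 0 = 0)
    (hc : ∀ i, c (i + 1) =
      c i ^^^ r i ^^^ (if (c i).testBit i then 2 ^ i * b else 0))
    (hr : ∀ i, r (i + 1) =
      2 * (((~~~(c i)) &&& r i)
        ^^^ ((r i) &&& (if (c i).testBit i then 2 ^ i * b else 0))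
        ^^^ ((if (c i).testBit i then 2 ^ i * b else 0) &&& (~~~(c i))))) :
    (∀ i : ℕ, (2 ^ i : ℤ) ∣ c i ∧ (2 ^ i : ℤ) ∣ r i) ∧
    Filter.Tendsto (fun i => ((c i : ℤ_[2]))) Filter.atTop (nhds 0) ∧
    Filter.Tendsto (fun i => ((r i : ℤ_[2]))) Filter.atTop (nhds 0) :=
  lopsided_division_tendsto_zero_general b hb c r hr0 hc hr
end

section
/- Negation as the limit of the XOR/carry iteration: let a : ℤ and define u, v : ℕ → ℤ by u 0 = ~~~a (the bitwise complement of a), v 0 = 1, u (k+1) = u k ^^^ v k, and v (k+1) = 2 * (u k &&& v k). Then in the 2-adic integers ℤ_[2], the sequence ((u k : ℤ_[2]))_k converges to ((-a : ℤ) : ℤ_[2]) and the carry sequence ((v k : ℤ_[2]))_k converges to 0. -/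
open Filter Topology

namespace Int

theorem not_eq_neg_sub_one (a : ℤ) : ~~~a = -a - 1 := by
  cases a with
  | ofNat n => show -[n+1] = -(n : ℤ) - 1; rw [negSucc_eq]; ring
  | negSucc n => show (n : ℤ) = -(-[n+1]) - 1; rw [negSucc_eq]; ring

/-- The base cases `0` and `-1` are the fixed points of `x ↦ x / 2`. -/
theorem bit_induction₂ {P : ℤ → ℤ → Prop}
    (base : ∀ x y, (x = 0 ∨ x = -1) → (y = 0 ∨ y = -1) → P x y)
    (bit : ∀ a b m n, P m n → P (bit a m) (bit b n)) (x y : ℤ) : P x y := by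
  induction h : x.natAbs + y.natAbs using Nat.strong_induction_on generalizing x y with
  | _ s ih =>
    by_cases hxy : (x = 0 ∨ x = -1) ∧ (y = 0 ∨ y = -1)
    · exact base x y hxy.1 hxy.2
    · have lt : (x / 2).natAbs + (y / 2).natAbs < s := by omega
      rw [← bit_decomp x, ← bit_decomp y, div2_val, div2_val]
      exact bit _ _ _ _ (ih _ lt _ _ rfl)

theorem xor_add_two_mul_land (x y : ℤ) : (x ^^^ y) + 2 * (x &&& y) = x + y := by
  induction x, y using bit_induction₂ with
  | base x y hx hy => rcases hx with rfl | rfl <;> rcases hy with rfl | rfl <;> decide +kernel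
  | bit a b m n ih =>
    change Int.xor _ _ + 2 * Int.land _ _ = _ at ih ⊢
    rw [lxor_bit, land_bit, bit_val, bit_val, bit_val, bit_val]
    cases a <;> cases b <;> simp <;> omega

theorem land_two_mul (x y : ℤ) : x &&& (2 * y) = 2 * (x / 2 &&& y) := by
  have two_mul_eq_bit : 2 * y = bit false y := by simp [bit_val]
  change Int.land _ _ = 2 * Int.land _ _
  conv_lhs => rw [two_mul_eq_bit, ← bit_decomp x]
  rw [land_bit, div2_val]
  simp [bit_val]

theorem two_pow_dvd_land_of_dvd_right {k : ℕ} {x y : ℤ} (h : 2 ^ k ∣ y) :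
    2 ^ k ∣ x &&& y := by
  induction k generalizing x y with
  | zero => exact one_dvd _
  | succ k ih =>
    obtain ⟨c, rfl⟩ := h
    rw [pow_succ', mul_assoc, land_two_mul]
    exact mul_dvd_mul_left 2 (ih (dvd_mul_right _ _))

end Int

theorem PadicInt.tendsto_zero_of_pow_dvd {p : ℕ} [Fact p.Prime] {v : ℕ → ℤ}
    (h : ∀ k, (p : ℤ) ^ k ∣ v k) : Tendsto (fun k => (v k : ℤ_[p])) atTop (𝓝 0) := by
  have p_inv_lt_one : (p : ℝ)⁻¹ < 1 :=
    inv_lt_one_of_one_lt₀ (mod_cast (Fact.out : p.Prime).one_lt)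
  refine squeeze_zero_norm (fun k => ?_)
    (tendsto_pow_atTop_nhds_zero_of_lt_one (inv_nonneg.2 (Nat.cast_nonneg p)) p_inv_lt_one)
  rw [inv_pow, ← zpow_natCast, ← zpow_neg]
  exact norm_int_le_pow_iff_dvd.2 (h k)

/-- Negation as the limit of the XOR/carry iteration started at `(~~~a, 1)`:
`u` converges 2-adically to `-a` and the carry sequence `v` converges to `0`. -/
theorem negation_xor_carry_limit (a : ℤ) (u v : ℕ → ℤ)
    (hu0 : u 0 = ~~~a) (hv0 : v 0 = 1)
    (hu : ∀ k, u (k + 1) = u k ^^^ v k)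
    (hv : ∀ k, v (k + 1) = 2 * (u k &&& v k)) :
    Filter.Tendsto (fun k => ((u k : ℤ_[2]))) Filter.atTop (nhds ((-a : ℤ) : ℤ_[2])) ∧
    Filter.Tendsto (fun k => ((v k : ℤ_[2]))) Filter.atTop (nhds 0) := by
  have sum_eq : ∀ k, u k + v k = -a := by
    intro k
    induction k with
    | zero => rw [hu0, hv0, Int.not_eq_neg_sub_one]; ring
    | succ k ih => rw [hu, hv, Int.xor_add_two_mul_land, ih]
  have carry_dvd : ∀ k, (2 : ℤ) ^ k ∣ v k := by
    intro k
    induction k with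
    | zero => simp
    | succ k ih =>
      rw [hv, pow_succ']
      exact mul_dvd_mul_left 2 (Int.two_pow_dvd_land_of_dvd_right ih)
  have v_lim : Tendsto (fun k => (v k : ℤ_[2])) atTop (𝓝 0) :=
    PadicInt.tendsto_zero_of_pow_dvd (mod_cast carry_dvd)
  refine ⟨?_, v_lim⟩
  have u_lim := (tendsto_const_nhds (x := ((-a : ℤ) : ℤ_[2]))).sub v_lim
  rw [sub_zero] at u_lim
  refine u_lim.congr fun k => ?_
  rw [← sum_eq k]
  push_cast
  ring
end
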